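/- The broadcast gossip process for k messages on a connected graph of diameter D delivers all k messages to all vertices within D + k rounds. -/

import Mathlib

/-- The synchronous broadcast gossip process with `k` messages on the graph `G` (see the
fields for the rules: each vertex broadcasts at most one pending not-yet-sent message per
round to all its neighbors, and must broadcast if it holds one). -/
structure GossipProcess {V : Type*} (G : SimpleGraph V) (k : ℕ) (origin : Fin k → V) where
  B : V → ℕ → Option (Fin k)
  init : ∀ v : V, B v 0 = none
  valid : ∀ (v : V) (r : ℕ) (m : Fin k), B v r = some m →
    (origin m = v ∨ ∃ r' < r, ∃ u : V, G.Adj u v ∧ B u r' = some m) ∧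
    ¬ ∃ r' < r, B v r' = some m
  active : ∀ (v : V) (r : ℕ), 1 ≤ r →
    (∃ m : Fin k, (origin m = v ∨ ∃ r' < r, ∃ u : V, G.Adj u v ∧ B u r' = some m) ∧
      ¬ ∃ r' < r, B v r' = some m) → B v r ≠ none

/-!
Fix a message `m` with origin `o`. The invariant is: if `v` has not broadcast `m` by round `t`,
then `t ≤ dist(o, v) + #(messages v has broadcast by round t)`. It is proved by induction on
`t`, simultaneously for all `v`. A round in which `v` broadcasts raises the count by one. In an
idle round, `v` has already broadcast everything it heard, in particular everything broadcast
by a neighbour `u` one step closer to `o`; so `u` has not broadcast `m` either, and the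
invariant for `u` transfers to `v`. While `m` is unsent the count is below `k`, so `v` broadcasts
`m` by round `dist(o, v) + k`, having heard it earlier from a neighbour.
-/

open Finset

namespace SimpleGraph

lemma Reachable.exists_adj_dist_add_one_eq {V : Type*} {G : SimpleGraph V} {u v : V}
    (h : G.Reachable u v) (hne : u ≠ v) : ∃ w, G.Adj w v ∧ G.dist u w + 1 = G.dist u v := by
  obtain ⟨p, hp⟩ := h.symm.exists_walk_length_eq_dist
  cases p with
  | nil => exact absurd rfl hne
  | @cons _ w _ hadj q =>
    refine ⟨w, hadj.symm, ?_⟩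
    have hw : G.dist u w ≤ q.length := dist_comm (G := G) ▸ dist_le q
    have hv : G.dist u v ≤ G.dist u w + 1 := by
      rcases hadj.symm.diff_dist_adj (u := u) with h | h | h <;> omega
    rw [Walk.length_cons, dist_comm] at hp
    omega

end SimpleGraph

namespace GossipProcess

variable {V : Type*} {G : SimpleGraph V} {k : ℕ} {origin : Fin k → V}
  (P : GossipProcess G k origin) {v : V} {m : Fin k} {t : ℕ}

def Knows (v : V) (m : Fin k) (r : ℕ) : Prop :=
  origin m = v ∨ ∃ r' < r, ∃ u : V, G.Adj u v ∧ P.B u r' = some m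

def sent (v : V) (t : ℕ) : Finset (Fin k) :=
  (range (t + 1)).biUnion fun r => (P.B v r).toFinset

variable {P}

lemma mem_sent : m ∈ P.sent v t ↔ ∃ r ≤ t, P.B v r = some m := by
  simp [sent]

lemma sent_mono {t t' : ℕ} (h : t ≤ t') : P.sent v t ⊆ P.sent v t' := fun _ hm =>
  let ⟨r, hr, hB⟩ := mem_sent.1 hm
  mem_sent.2 ⟨r, hr.trans h, hB⟩

lemma sent_succ : P.sent v (t + 1) = P.sent v t ∪ (P.B v (t + 1)).toFinset := by
  rw [sent, range_add_one, biUnion_insert, union_comm]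
  rfl

lemma sent_succ_of_eq_none (h : P.B v (t + 1) = none) : P.sent v (t + 1) = P.sent v t := by
  simp [sent_succ, h]

lemma card_sent_succ_of_eq_some {m' : Fin k} (h : P.B v (t + 1) = some m') :
    #(P.sent v (t + 1)) = #(P.sent v t) + 1 := by
  have hnew : m' ∉ P.sent v t := fun hm =>
    let ⟨r, hr, hB⟩ := mem_sent.1 hm
    (P.valid v (t + 1) m' h).2 ⟨r, Nat.lt_succ_of_le hr, hB⟩
  rw [sent_succ, h, Option.toFinset_some, union_comm, ← insert_eq, card_insert_of_notMem hnew]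

lemma mem_sent_of_eq_none_of_knows (h : P.B v (t + 1) = none) (hm : P.Knows v m (t + 1)) :
    m ∈ P.sent v t := by
  by_contra hm'
  refine P.active v (t + 1) t.succ_pos ⟨m, hm, ?_⟩ h
  rintro ⟨r, hr, hB⟩
  exact hm' (mem_sent.2 ⟨r, Nat.le_of_lt_succ hr, hB⟩)

lemma le_dist_add_card_sent_of_notMem_sent (hG : G.Connected) (m : Fin k) :
    ∀ t (v : V), m ∉ P.sent v t → t ≤ G.dist (origin m) v + #(P.sent v t) := by
  intro t
  induction t with
  | zero => intro v _; exact Nat.zero_le _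
  | succ t ih =>
    intro v hm
    cases hB : P.B v (t + 1) with
    | some m' =>
      have := ih v fun h => hm (sent_mono t.le_succ h)
      rw [card_sent_succ_of_eq_some hB]
      omega
    | none =>
      rw [sent_succ_of_eq_none hB] at hm ⊢
      have hheard : ∀ {m'} {u}, G.Adj u v → m' ∈ P.sent u t → m' ∈ P.sent v t :=
        fun hadj hm' =>
          let ⟨r, hr, hBu⟩ := mem_sent.1 hm'
          mem_sent_of_eq_none_of_knows hB (Or.inr ⟨r, Nat.lt_succ_of_le hr, _, hadj, hBu⟩)
      have hov : origin m ≠ v := fun h => hm (mem_sent_of_eq_none_of_knows hB (Or.inl h))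
      obtain ⟨u, hadj, hdist⟩ := (hG.preconnected (origin m) v).exists_adj_dist_add_one_eq hov
      have hu := ih u fun h => hm (hheard hadj h)
      have hcard : #(P.sent u t) ≤ #(P.sent v t) := card_le_card fun _ => hheard hadj
      omega

lemma exists_le_dist_add_eq_some (hG : G.Connected) (v : V) (m : Fin k) :
    ∃ r ≤ G.dist (origin m) v + k, P.B v r = some m := by
  refine mem_sent.1 (not_not.1 fun hm => ?_)
  have hinv := le_dist_add_card_sent_of_notMem_sent hG m _ v hm
  have hlt := card_lt_univ_of_notMem hm
  rw [Fintype.card_fin] at hlt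
  omega

end GossipProcess

theorem stmt_7_general {V : Type*} (G : SimpleGraph V) (hG : G.Connected)
    (D : ℕ) (hD : ∀ u v : V, G.dist u v ≤ D)
    (k : ℕ) (origin : Fin k → V) (P : GossipProcess G k origin) :
    ∀ (v : V) (m : Fin k),
      origin m = v ∨ ∃ r ≤ D + k, ∃ u : V, G.Adj u v ∧ P.B u r = some m := by
  intro v m
  obtain ⟨r, hr, hB⟩ := P.exists_le_dist_add_eq_some hG v m
  rcases (P.valid v r m hB).1 with hov | ⟨r', hr', u, hadj, hBu⟩
  · exact Or.inl hov
  · exact Or.inr ⟨r', by have := hD (origin m) v; omega, u, hadj, hBu⟩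

/-- Broadcast gossip with `k ≥ 1` messages on a connected graph of diameter at most `D`
delivers every message to every vertex within `D + k` rounds: each vertex either originated
the message or receives it from a neighbor's broadcast in some round `≤ D + k`. -/
theorem stmt_7 {V : Type*} (G : SimpleGraph V) (hG : G.Connected)
    (D : ℕ) (hD : ∀ u v : V, G.dist u v ≤ D)
    (k : ℕ) (hk : 1 ≤ k) (origin : Fin k → V) (P : GossipProcess G k origin) :
    ∀ (v : V) (m : Fin k),
      origin m = v ∨ ∃ r ≤ D + k, ∃ u : V, G.Adj u v ∧ P.B u r = some m :=
  stmt_7_general G hG D hD k origin P
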